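/- A shortcut is useless from its umbra: if s is a shortcut and p ∈ U(s), then for every q ∈ C one has d_{{s}}(p,q) = d(p,q); that is, min(d(p,q), d(p,u)+|s|+d(v,q), d(p,v)+|s|+d(u,q)) = d(p,q), where u,v are the endpoints of s. -/
import Mathlib


open Real MeasureTheory

/-- Arc distance between points on the unit circle, given by their polar angles:
the length of the shorter arc between them. -/
noncomputable def arcDist (p q : ℝ) : ℝ := ⨅ n : ℤ, |p - q + 2 * π * n|

/-- Euclidean length of the chord between the circle points with angles `u` and `v`. -/
noncomputable def chordLen (u v : ℝ) : ℝ := 2 * Real.sin (arcDist u v / 2)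

/-- A pair of angles is a genuine shortcut (chord) if its endpoints are distinct points. -/
def IsShortcut (s : ℝ × ℝ) : Prop := arcDist s.1 s.2 ≠ 0

/-- δ(a) = arcsin(a/2) - a/2. -/
noncomputable def sdelta (a : ℝ) : ℝ := Real.arcsin (a / 2) - a / 2

/-- Cost of a path that starts at `p`, fully traverses the listed chords in order
(travelling along the circle in between), and ends at `q`. -/
noncomputable def walkCost (q : ℝ) : ℝ → List (ℝ × ℝ) → ℝ
  | p, [] => arcDist p q
  | p, e :: L => arcDist p e.1 + chordLen e.1 e.2 + walkCost q e.2 L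

/-- Shortest-path distance from `p` to `q` using the shortcuts of `S`
(each usable in either orientation, and always traversed completely). -/
noncomputable def dS (S : Finset (ℝ × ℝ)) (p q : ℝ) : ℝ :=
  sInf {c | ∃ L : List (ℝ × ℝ), (∀ e ∈ L, e ∈ S ∨ (e.2, e.1) ∈ S) ∧ c = walkCost q p L}

/-- Diameter of the circle augmented with the shortcuts of `S`. -/
noncomputable def diamS (S : Finset (ℝ × ℝ)) : ℝ :=
  sSup {d | ∃ p q : ℝ, d = dS S p q}

/-- diam(k): the optimal diameter achievable with `k` shortcuts. -/
noncomputable def diamK (k : ℕ) : ℝ :=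
  sInf {d | ∃ S : Finset (ℝ × ℝ), S.card = k ∧ (∀ s ∈ S, IsShortcut s) ∧ d = diamS S}

/-- Distance from `p` to `q` when a single shortcut with endpoints `u`, `v` is available. -/
noncomputable def dOne (u v p q : ℝ) : ℝ :=
  min (arcDist p q)
    (min (arcDist p u + chordLen u v + arcDist v q)
      (arcDist p v + chordLen u v + arcDist u q))

/-- Two angles represent the same point of the circle. -/
def SamePoint (p q : ℝ) : Prop := arcDist p q = 0

/-- Two pairs of angles represent the same chord of the circle. -/
def SameChord (s t : ℝ × ℝ) : Prop :=
  (SamePoint s.1 t.1 ∧ SamePoint s.2 t.2) ∨ (SamePoint s.1 t.2 ∧ SamePoint s.2 t.1)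

/-- `p` lies in the deep umbra of the shortcut from `u` to `u + β`
(where `0 < β ≤ π` is the counterclockwise arc spanned by the shortcut):
`p` lies in the inner umbra, and `|p u'| + |s| ≥ d(p, v')` where `u'` is the
endpoint closer to `p` and `v'` the other one. -/
def InDeepUmbra (u β p : ℝ) : Prop :=
  (∃ t : ℝ, sdelta (chordLen u (u + β)) ≤ t ∧ t ≤ β - sdelta (chordLen u (u + β)) ∧
    arcDist p (u + t) = 0) ∧
  (arcDist p u ≤ arcDist p (u + β) →
    arcDist p (u + β) ≤ chordLen p u + chordLen u (u + β)) ∧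
  (arcDist p (u + β) ≤ arcDist p u →
    arcDist p u ≤ chordLen p (u + β) + chordLen u (u + β))

/-- `d` equals δ*_k : for `k ∈ {3,4,5}` this is `δ(a*_k)` where `a*_k + δ(a*_k) = (k-1)π/k`,
and for `k = 6` it is `δ(2) = π/2 - 1`. -/
def dstarSpec (k : ℕ) (d : ℝ) : Prop :=
  (k = 6 ∧ d = sdelta 2) ∨
    (∃ a, a ∈ Set.Icc (0 : ℝ) 2 ∧ a + sdelta a = ((k : ℝ) - 1) * π / k ∧ d = sdelta a)

lemma arcDist_le' (p q : ℝ) (n : ℤ) : arcDist p q ≤ |p - q + 2 * π * n| := by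
  refine ciInf_le ⟨0, ?_⟩ n
  rintro x ⟨m, rfl⟩; exact abs_nonneg _

lemma arcDist_nonneg (p q : ℝ) : 0 ≤ arcDist p q := le_ciInf fun n => abs_nonneg _

lemma arcDist_exists (p q : ℝ) :
    ∃ n : ℤ, arcDist p q = |p - q + 2 * π * n| ∧ |p - q + 2 * π * n| ≤ π := by
  have h2π : (0:ℝ) < 2 * π := by positivity
  set x := p - q with hx
  refine ⟨-round (x / (2*π)), le_antisymm (arcDist_le' p q _) (le_ciInf fun m => ?_), ?_⟩
  · have key := round_le (x / (2*π)) (-m)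
    have e1 : x + 2*π*((-round (x/(2*π)) : ℤ) : ℝ) = (2*π) * (x/(2*π) - round (x/(2*π))) := by
      push_cast; field_simp; try ring
    have e2 : x + 2*π*(m:ℝ) = (2*π) * (x/(2*π) - ((-m : ℤ):ℝ)) := by
      push_cast; field_simp; try ring
    rw [e1, e2, abs_mul (2*π), abs_mul (2*π)]
    exact mul_le_mul_of_nonneg_left key (abs_nonneg _)
  · have key := abs_sub_round (x / (2*π))
    have e1 : x + 2*π*((-round (x/(2*π)) : ℤ) : ℝ) = (2*π) * (x/(2*π) - round (x/(2*π))) := by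
      push_cast; field_simp; try ring
    rw [e1, abs_mul (2*π), abs_of_pos h2π]
    nlinarith [pi_pos]

lemma arcDist_symm (p q : ℝ) : arcDist p q = arcDist q p := by
  have h : ∀ a b : ℝ, arcDist a b ≤ arcDist b a := by
    intro a b
    obtain ⟨n, hn, -⟩ := arcDist_exists b a
    calc arcDist a b ≤ |a - b + 2*π*((-n : ℤ):ℝ)| := arcDist_le' a b (-n)
      _ = |b - a + 2*π*(n:ℝ)| := by push_cast; rw [← abs_neg]; ring_nf
      _ = arcDist b a := hn.symm
  exact le_antisymm (h p q) (h q p)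

lemma arcDist_triangle (p r q : ℝ) : arcDist p q ≤ arcDist p r + arcDist r q := by
  obtain ⟨m, hm, -⟩ := arcDist_exists p r
  obtain ⟨n, hn, -⟩ := arcDist_exists r q
  calc arcDist p q ≤ |p - q + 2*π*((m+n : ℤ):ℝ)| := arcDist_le' p q (m+n)
    _ = |(p - r + 2*π*(m:ℝ)) + (r - q + 2*π*(n:ℝ))| := by push_cast; ring_nf
    _ ≤ |p - r + 2*π*(m:ℝ)| + |r - q + 2*π*(n:ℝ)| := abs_add_le _ _
    _ = arcDist p r + arcDist r q := by rw [hm, hn]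

lemma arcDist_eq_abs {p q : ℝ} (h : |p - q| ≤ π) : arcDist p q = |p - q| := by
  refine le_antisymm ?_ (le_ciInf fun n => ?_)
  · have := arcDist_le' p q 0
    simpa using this
  · rcases eq_or_ne n 0 with rfl | hn
    · simp
    · have h1 : (1:ℝ) ≤ |(n:ℝ)| := by exact_mod_cast Int.one_le_abs hn
      have h2 : 2*π ≤ |2*π*(n:ℝ)| := by
        rw [abs_mul, abs_of_pos (by positivity : (0:ℝ) < 2*π)]
        nlinarith [pi_pos]
      have h3 : |2*π*(n:ℝ)| ≤ |p - q + 2*π*(n:ℝ)| + |p - q| := by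
        calc |2*π*(n:ℝ)| = |(p - q + 2*π*(n:ℝ)) + (q - p)| := by ring_nf
          _ ≤ |p - q + 2*π*(n:ℝ)| + |q - p| := abs_add_le _ _
          _ = |p - q + 2*π*(n:ℝ)| + |p - q| := by rw [abs_sub_comm]
      linarith

lemma arcDist_period (p q : ℝ) (m : ℤ) : arcDist p (q + 2*π*m) = arcDist p q := by
  have h : ∀ (q' : ℝ) (m' : ℤ), arcDist p (q' + 2*π*m') ≤ arcDist p q' := by
    intro q' m'
    obtain ⟨n, hn, -⟩ := arcDist_exists p q'
    calc arcDist p (q' + 2*π*m') ≤ |p - (q' + 2*π*m') + 2*π*((n+m':ℤ):ℝ)| :=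
        arcDist_le' p _ (n+m')
      _ = |p - q' + 2*π*(n:ℝ)| := by push_cast; ring_nf
      _ = arcDist p q' := hn.symm
  refine le_antisymm (h q m) ?_
  have := h (q + 2*π*m) (-m)
  simpa using this

lemma arcDist_congr {p p' : ℝ} (h : arcDist p p' = 0) (x : ℝ) : arcDist p x = arcDist p' x := by
  have h1 := arcDist_triangle p p' x
  have h2 := arcDist_triangle p' p x
  rw [h] at h1
  rw [arcDist_symm p' p, h] at h2
  linarith

/-- a shortcut is useless from its umbra. Let the shortcut span the
counterclockwise arc from `u` to `v = u + β` with `0 < β ≤ π` (so this is the shorter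
arc). If `p` lies in the umbra `U(s)` (inner umbra: points `u + t` with
`δ(s) ≤ t ≤ β - δ(s)`; outer umbra: their antipodes), then `d_{{s}}(p,q) = d(p,q)`
for every `q`. -/
theorem stmt9 (u β : ℝ) (hβ : 0 < β) (hβπ : β ≤ π) (p : ℝ)
    (hp : ∃ t : ℝ, sdelta (chordLen u (u + β)) ≤ t ∧
      t ≤ β - sdelta (chordLen u (u + β)) ∧
      (arcDist p (u + t) = 0 ∨ arcDist p (u + π + t) = 0)) :
    ∀ q : ℝ, dOne u (u + β) p q = arcDist p q := by
  intro q
  have hchordarc : arcDist u (u + β) = β := by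
    have h1 : |u - (u + β)| = β := by
      rw [show u - (u + β) = -β by ring, abs_neg, abs_of_pos hβ]
    rw [arcDist_eq_abs (by rw [h1]; exact hβπ), h1]
  have ha : chordLen u (u + β) = 2 * Real.sin (β / 2) := by rw [chordLen, hchordarc]
  have hδ : sdelta (chordLen u (u + β)) = β / 2 - Real.sin (β / 2) := by
    rw [ha, sdelta, show 2 * Real.sin (β / 2) / 2 = Real.sin (β / 2) by ring,
      Real.arcsin_sin (by nlinarith [pi_pos]) (by linarith)]
  have hsin0 : 0 ≤ Real.sin (β / 2) :=
    Real.sin_nonneg_of_nonneg_of_le_pi (by linarith) (by linarith [pi_pos])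
  have hδ0 : 0 ≤ β / 2 - Real.sin (β / 2) := by
    have := Real.sin_le (by linarith : (0:ℝ) ≤ β / 2); linarith
  obtain ⟨t, ht1, ht2, hcase⟩ := hp
  rw [hδ] at ht1 ht2
  have ht0 : 0 ≤ t := le_trans hδ0 ht1
  have htβ : t ≤ β := by linarith
  have htπ : t ≤ π := le_trans htβ hβπ
  have key : arcDist p (u + β) ≤ arcDist p u + chordLen u (u + β) ∧
      arcDist p u ≤ arcDist p (u + β) + chordLen u (u + β) := by
    rw [ha]
    rcases hcase with h | h
    · have e1 : arcDist p u = t := by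
        rw [arcDist_congr h u,
          arcDist_eq_abs (by rw [show u + t - u = t by ring, abs_of_nonneg ht0]; exact htπ),
          show u + t - u = t by ring, abs_of_nonneg ht0]
      have e2 : arcDist p (u + β) = β - t := by
        have habs : |u + t - (u + β)| = β - t := by
          rw [show u + t - (u + β) = -(β - t) by ring, abs_neg, abs_of_nonneg (by linarith)]
        rw [arcDist_congr h (u + β), arcDist_eq_abs (by rw [habs]; linarith), habs]
      rw [e1, e2]
      constructor <;> linarith
    · have e1 : arcDist p u = π - t := by
        rw [arcDist_congr h u, arcDist_symm,
          show u + π + t = u + t - π + 2 * π * ((1 : ℤ) : ℝ) by push_cast; ring,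
          arcDist_period]
        have habs : |u - (u + t - π)| = π - t := by
          rw [show u - (u + t - π) = π - t by ring, abs_of_nonneg (by linarith)]
        rw [arcDist_eq_abs (by rw [habs]; linarith), habs]
      have e2 : arcDist p (u + β) = π + t - β := by
        have habs : |u + π + t - (u + β)| = π + t - β := by
          rw [show u + π + t - (u + β) = π + t - β by ring, abs_of_nonneg (by linarith)]
        rw [arcDist_congr h (u + β), arcDist_eq_abs (by rw [habs]; linarith), habs]
      rw [e1, e2]
      constructor <;> linarith
  obtain ⟨k1, k2⟩ := key
  have t1 : arcDist p q ≤ arcDist p u + chordLen u (u + β) + arcDist (u + β) q :=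
    (arcDist_triangle p (u + β) q).trans (by linarith)
  have t2 : arcDist p q ≤ arcDist p (u + β) + chordLen u (u + β) + arcDist u q :=
    (arcDist_triangle p u q).trans (by linarith)
  exact min_eq_left (le_min t1 t2)
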